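/- For every natural number k ≥ 0, the fermionic Stirling numbers of the first kind satisfy s_f(2k+3, k+1) = s_f(2k+2, k) − ε_{2k+2} · s_f(2k+2, k+1), and consequently s_f(2k+3, k+1) = 0. -/
import Mathlib


open Finset

/-- `ε_n = (1 - (-1)^n)/2`, so `ε_n = 0` for even `n` and `ε_n = 1` for odd `n`. -/
def eps (n : ℕ) : ℤ := (1 - (-1 : ℤ) ^ n) / 2

/-- The fermionic Stirling numbers of the first kind, defined by the recurrence
`s_f(n+1,k) = (-1)^n s_f(n,k-1) + (-1)^{n+1} ε_n s_f(n,k)`, with `s_f(0,0) = 1`,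
`s_f(n,0) = 0` for `n ≥ 1`, and `s_f(n,k) = 0` for `k > n`. -/
def sf : ℕ → ℕ → ℤ
  | 0, 0 => 1
  | 0, _ + 1 => 0
  | _ + 1, 0 => 0
  | n + 1, k + 1 => (-1 : ℤ) ^ n * sf n k + (-1 : ℤ) ^ (n + 1) * eps n * sf n (k + 1)

lemma eps_even {n : ℕ} (h : Even n) : eps n = 0 := by
  unfold eps
  rw [Even.neg_one_pow h]
  norm_num

lemma sf_eq_zero : ∀ n k : ℕ, 2 * k < n → sf n k = 0 := by
  intro n
  induction n with
  | zero => intro k h; omega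
  | succ n ih =>
    intro k h
    match k with
    | 0 =>
      cases n <;> simp [sf]
    | k + 1 =>
      rw [sf]
      have h1 : sf n k = 0 := ih k (by omega)
      rcases lt_or_eq_of_le (show 2 * (k + 1) ≤ n by omega) with h2 | h2
      · rw [h1, ih (k + 1) h2]; ring
      · rw [h1, eps_even ⟨k + 1, by omega⟩]; ring

theorem sf_two_add_three (k : ℕ) :
    sf (2 * k + 3) (k + 1) = sf (2 * k + 2) k - eps (2 * k + 2) * sf (2 * k + 2) (k + 1) ∧
    sf (2 * k + 3) (k + 1) = 0 := by
  have he : eps (2 * k + 2) = 0 := eps_even ⟨k + 1, by omega⟩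
  have hz : sf (2 * k + 2) k = 0 := sf_eq_zero _ _ (by omega)
  have hrec : sf (2 * k + 3) (k + 1) =
      (-1 : ℤ) ^ (2 * k + 2) * sf (2 * k + 2) k +
      (-1 : ℤ) ^ (2 * k + 2 + 1) * eps (2 * k + 2) * sf (2 * k + 2) (k + 1) := by
    show sf (2 * k + 2 + 1) (k + 1) = _
    rw [sf]
  constructor
  · rw [hrec, he, Even.neg_one_pow ⟨k + 1, by omega⟩]; ring
  · rw [hrec, he, hz]; ring
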